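/- Let p(x) = Σ_z π(z) ∏_{j} p_j(x_j | z) be a latent-variable mixture computed by a smooth, decomposable PC on a fixed input x with p(x) > 0. For each sum edge (n,c) of the circuit, the flow F_{n,c}(x) (Definition 4) equals the conditional probability, under the generative sampling process conditioned on the event that the sampled instance is x, that edge (n,c) is traversed—provided the circuit is tree-shaped. Consequently F_{n,c}(x) ∈ [0,1]. -/

import Mathlib

/-!
Give a run `(S, w)` of the sampler the mass `w · ∏_{q ∈ S} G q`, where `G` is the input
likelihood at the leaves of `S` and `1` at its internal units. The runs of a sum unit are the
`θ`-weighted runs of a single child, and those of a product unit are unions of independent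
child runs on disjoint subtrees, so masses add at sum units and multiply at product units, and
the total mass is `p(x)`. Restricting to the runs through `i :: p` restricts only the `i`-th
child: at a sum unit the restricted mass is `θ_i` times the child's, at a product unit it is
the child's times the same factor that turns `p_c(x)` into `p_n(x)`. These are the factors of
the flow recursion, so by induction along the path `F_n(x) · p(x)` is the mass of the runs
through `n`; dividing by `p(x)` gives the conditional probability, in `[0,1]` because all
masses are nonnegative.
-/

/-- A tree-shaped probabilistic circuit skeleton: leaves (input units),
sum units with weighted children, and product units. -/
inductive PCTree where
  | leaf : PCTree
  | sum : List (ℝ × PCTree) → PCTree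
  | prod : List PCTree → PCTree

namespace PCTree

/-- Validity: at every sum unit the child weights are nonnegative and sum to 1. -/
inductive Valid : PCTree → Prop
  | leaf : Valid .leaf
  | sum {cs : List (ℝ × PCTree)} :
      (∀ pc ∈ cs, 0 ≤ pc.1) → (∀ pc ∈ cs, Valid pc.2) →
      (cs.map Prod.fst).sum = 1 → Valid (.sum cs)
  | prod {cs : List PCTree} : (∀ c ∈ cs, Valid c) → Valid (.prod cs)

/-- Nodes are addressed by paths (lists of child indices) from the root. -/
def IsNode : PCTree → List ℕ → Prop
  | _, [] => True
  | .leaf, _ :: _ => False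
  | .sum cs, i :: p => match cs[i]? with
      | some pc => IsNode pc.2 p
      | none => False
  | .prod cs, i :: p => match cs[i]? with
      | some c => IsNode c p
      | none => False
  termination_by _ path => path.length

/-- Top-down probability of the node at a given path (Definition 3): the root has
top-down probability 1, a sum unit distributes its top-down probability to its
children weighted by the edge parameters, and a product unit passes it unchanged. -/
def q : PCTree → List ℕ → ℝ
  | _, [] => 1
  | .leaf, _ :: _ => 0
  | .sum cs, i :: p => match cs[i]? with
      | some pc => pc.1 * q pc.2 p
      | none => 0
  | .prod cs, i :: p => match cs[i]? with
      | some c => q c p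
      | none => 0
  termination_by _ path => path.length

mutual
/-- All runs of the generative sampling process (Algorithm 1), as pairs of
(set of visited node paths, probability of that run). At a sum unit one child is
chosen (with its edge probability as factor); at a product unit all children are
visited (probabilities multiply). -/
def runs : PCTree → List (Finset (List ℕ) × ℝ)
  | .leaf => [({[]}, 1)]
  | .sum cs => runsSum 0 cs
  | .prod cs => runsProd 0 cs

def runsSum : ℕ → List (ℝ × PCTree) → List (Finset (List ℕ) × ℝ)
  | _, [] => []
  | i, pc :: rest =>
      ((runs pc.2).map fun Sw => (insert [] (Sw.1.image (i :: ·)), pc.1 * Sw.2)) ++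
        runsSum (i + 1) rest

def runsProd : ℕ → List PCTree → List (Finset (List ℕ) × ℝ)
  | _, [] => [({[]}, 1)]
  | i, c :: rest =>
      (runs c).flatMap fun Sw =>
        (runsProd (i + 1) rest).map fun Tw =>
          (insert [] (Sw.1.image (i :: ·)) ∪ Tw.1, Sw.2 * Tw.2)
end


mutual
/-- Evaluation `p_n(x)` of the sub-circuit rooted at prefix `pre`, where
`f q` gives the likelihood of the input unit at leaf path `q` on the fixed input `x`. -/
def eval (f : List ℕ → ℝ) : List ℕ → PCTree → ℝ
  | pre, .leaf => f pre
  | pre, .sum cs => evalSum f pre 0 cs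
  | pre, .prod cs => evalProd f pre 0 cs

def evalSum (f : List ℕ → ℝ) : List ℕ → ℕ → List (ℝ × PCTree) → ℝ
  | _, _, [] => 0
  | pre, i, pc :: rest => pc.1 * eval f (pre ++ [i]) pc.2 + evalSum f pre (i + 1) rest

def evalProd (f : List ℕ → ℝ) : List ℕ → ℕ → List PCTree → ℝ
  | _, _, [] => 1
  | pre, i, c :: rest => eval f (pre ++ [i]) c * evalProd f pre (i + 1) rest
end

/-- Circuit flow (Definition 4) of the node at the given path, on the input with leaf
likelihoods `f`: the root has flow 1; flow passes unchanged through product units; a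
sum unit `n'` passes flow `θ_{c'|n'} p_{c'}(x)/p_{n'}(x)` to child `c'`. The flow of a
sum edge `(n,c)` in a tree equals the flow of the child node `c`. -/
noncomputable def flowAux (f : List ℕ → ℝ) : PCTree → List ℕ → List ℕ → ℝ
  | _, _, [] => 1
  | .leaf, _, _ :: _ => 0
  | .sum cs, pre, i :: p =>
      match cs[i]? with
      | some pc =>
          (pc.1 * eval f (pre ++ [i]) pc.2 / eval f pre (.sum cs)) *
            flowAux f pc.2 (pre ++ [i]) p
      | none => 0
  | .prod cs, pre, i :: p =>
      match cs[i]? with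
      | some c => flowAux f c (pre ++ [i]) p
      | none => 0
  termination_by _ _ path => path.length

noncomputable def flow (f : List ℕ → ℝ) (t : PCTree) (n : List ℕ) : ℝ := flowAux f t [] n

/-- Whether the path addresses an input unit (leaf) of the circuit. -/
def isLeafAt : PCTree → List ℕ → Bool
  | .leaf, [] => true
  | .leaf, _ :: _ => false
  | .sum _, [] => false
  | .prod _, [] => false
  | .sum cs, i :: p => match cs[i]? with | some pc => isLeafAt pc.2 p | none => false
  | .prod cs, i :: p => match cs[i]? with | some c => isLeafAt c p | none => false
  termination_by _ path => path.length

/-- Likelihood of observing the fixed input `x` (with leaf likelihoods `f`) along a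
given run: the product of the input-unit likelihoods at the leaves visited by the run. -/
def runLike (f : List ℕ → ℝ) (t : PCTree) (S : Finset (List ℕ)) : ℝ :=
  ∏ q ∈ S.filter (fun q => t.isLeafAt q), f q

end PCTree

namespace PCTree

def leafWeight (f : List ℕ → ℝ) (t : PCTree) (q : List ℕ) : ℝ :=
  if t.isLeafAt q then f q else 1

theorem runLike_eq_prod_leafWeight (f : List ℕ → ℝ) (t : PCTree) (S : Finset (List ℕ)) :
    t.runLike f S = ∏ q ∈ S, leafWeight f t q :=
  Finset.prod_filter _ _

theorem leafWeight_nonneg {f : List ℕ → ℝ} (hf : ∀ q, 0 ≤ f q) (t : PCTree) (q : List ℕ) :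
    0 ≤ leafWeight f t q := by
  unfold leafWeight
  split
  · exact hf q
  · exact zero_le_one

@[simp]
theorem leafWeight_sum_nil (f : List ℕ → ℝ) (cs : List (ℝ × PCTree)) :
    leafWeight f (.sum cs) [] = 1 := by
  simp [leafWeight, isLeafAt]

@[simp]
theorem leafWeight_prod_nil (f : List ℕ → ℝ) (cs : List PCTree) :
    leafWeight f (.prod cs) [] = 1 := by
  simp [leafWeight, isLeafAt]

theorem leafWeight_sum_cons {cs : List (ℝ × PCTree)} {i : ℕ} {pc : ℝ × PCTree}
    (h : cs[i]? = some pc) (f : List ℕ → ℝ) (r : List ℕ) :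
    leafWeight f (.sum cs) (i :: r) = leafWeight (fun q => f (i :: q)) pc.2 r := by
  simp [leafWeight, isLeafAt, h]

theorem leafWeight_prod_cons {cs : List PCTree} {i : ℕ} {c : PCTree}
    (h : cs[i]? = some c) (f : List ℕ → ℝ) (r : List ℕ) :
    leafWeight f (.prod cs) (i :: r) = leafWeight (fun q => f (i :: q)) c r := by
  simp [leafWeight, isLeafAt, h]

section Products

variable {G : List ℕ → ℝ}

theorem prod_insert_nil_image (hG : G [] = 1) (i : ℕ) (S : Finset (List ℕ)) :
    ∏ q ∈ insert [] (S.image (i :: ·)), G q = ∏ r ∈ S, G (i :: r) := by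
  rw [Finset.prod_insert (by simp), hG, one_mul,
    Finset.prod_image fun _ _ _ _ h => List.cons_injective h]

theorem prod_insert_nil_image_union (hG : G [] = 1) {i : ℕ} {S T : Finset (List ℕ)}
    (hT : ∀ k r, k :: r ∈ T → i < k) :
    ∏ q ∈ insert [] (S.image (i :: ·)) ∪ T, G q = (∏ r ∈ S, G (i :: r)) * ∏ q ∈ T, G q := by
  have hinter : ∏ q ∈ insert [] (S.image (i :: ·)) ∩ T, G q = 1 := by
    refine Finset.prod_eq_one fun q hq => ?_
    obtain ⟨hqS, hqT⟩ := Finset.mem_inter.mp hq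
    rcases Finset.mem_insert.mp hqS with rfl | hq
    · exact hG
    · obtain ⟨r, -, rfl⟩ := Finset.mem_image.mp hq
      exact absurd (hT i r hqT) (lt_irrefl i)
  rw [← prod_insert_nil_image hG, ← Finset.prod_union_inter, hinter, mul_one]

end Products

theorem nil_mem_of_mem_runsSum {cs : List (ℝ × PCTree)} {j : ℕ} :
    ∀ Sw ∈ runsSum j cs, [] ∈ Sw.1 := by
  induction cs generalizing j with
  | nil => simp [runsSum]
  | cons pc rest ih =>
    simp only [runsSum, List.mem_append, List.mem_map]
    rintro Sw (⟨Sw', -, rfl⟩ | hSw)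
    · exact Finset.mem_insert_self _ _
    · exact ih Sw hSw

theorem nil_mem_of_mem_runsProd {cs : List PCTree} {j : ℕ} :
    ∀ Sw ∈ runsProd j cs, [] ∈ Sw.1 := by
  cases cs with
  | nil => simp [runsProd]
  | cons c rest =>
    simp only [runsProd, List.mem_flatMap, List.mem_map]
    rintro Sw ⟨Sw₀, -, Tw, -, rfl⟩
    exact Finset.mem_union_left _ (Finset.mem_insert_self _ _)

theorem nil_mem_of_mem_runs {t : PCTree} : ∀ Sw ∈ t.runs, [] ∈ Sw.1 := by
  cases t with
  | leaf => simp [runs]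
  | sum cs => exact nil_mem_of_mem_runsSum
  | prod cs => exact nil_mem_of_mem_runsProd

theorem le_head_of_mem_runsSum {cs : List (ℝ × PCTree)} {j : ℕ} :
    ∀ Sw ∈ runsSum j cs, ∀ k r, k :: r ∈ Sw.1 → j ≤ k := by
  induction cs generalizing j with
  | nil => simp [runsSum]
  | cons pc rest ih =>
    simp only [runsSum, List.mem_append, List.mem_map]
    rintro Sw (⟨Sw', -, rfl⟩ | hSw) k r hkr
    · simp only [Finset.mem_insert, Finset.mem_image, List.cons.injEq] at hkr
      grind
    · exact (ih Sw hSw k r hkr).trans' (Nat.le_succ j)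

theorem le_head_of_mem_runsProd {cs : List PCTree} {j : ℕ} :
    ∀ Sw ∈ runsProd j cs, ∀ k r, k :: r ∈ Sw.1 → j ≤ k := by
  induction cs generalizing j with
  | nil => simp [runsProd]
  | cons c rest ih =>
    simp only [runsProd, List.mem_flatMap, List.mem_map]
    rintro Sw ⟨Sw₀, -, Tw, hTw, rfl⟩ k r hkr
    simp only [Finset.mem_union, Finset.mem_insert, Finset.mem_image, List.cons.injEq] at hkr
    rcases hkr with hkr | hkr
    · grind
    · exact (ih Tw hTw k r hkr).trans' (Nat.le_succ j)

theorem weight_nonneg_of_mem_runsSum {cs : List (ℝ × PCTree)} {j : ℕ}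
    (hθ : ∀ pc ∈ cs, 0 ≤ pc.1) (hcs : ∀ pc ∈ cs, ∀ Sw ∈ pc.2.runs, 0 ≤ Sw.2) :
    ∀ Sw ∈ runsSum j cs, 0 ≤ Sw.2 := by
  induction cs generalizing j with
  | nil => simp [runsSum]
  | cons pc rest ih =>
    simp only [runsSum, List.mem_append, List.mem_map]
    rintro Sw (⟨Sw', hSw', rfl⟩ | hSw)
    · exact mul_nonneg (hθ pc (by simp)) (hcs pc (by simp) Sw' hSw')
    · exact ih (fun pc h => hθ pc (by simp [h])) (fun pc h => hcs pc (by simp [h])) Sw hSw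

theorem weight_nonneg_of_mem_runsProd {cs : List PCTree} {j : ℕ}
    (hcs : ∀ c ∈ cs, ∀ Sw ∈ c.runs, 0 ≤ Sw.2) :
    ∀ Sw ∈ runsProd j cs, 0 ≤ Sw.2 := by
  induction cs generalizing j with
  | nil => simp [runsProd]
  | cons c rest ih =>
    simp only [runsProd, List.mem_flatMap, List.mem_map]
    rintro Sw ⟨Sw₀, hSw₀, Tw, hTw, rfl⟩
    exact mul_nonneg (hcs c (by simp) Sw₀ hSw₀) (ih (fun c h => hcs c (by simp [h])) Tw hTw)

theorem Valid.weight_nonneg {t : PCTree} (ht : t.Valid) : ∀ Sw ∈ t.runs, 0 ≤ Sw.2 := by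
  induction ht with
  | leaf => simp [runs]
  | sum hθ _ _ ih => exact weight_nonneg_of_mem_runsSum hθ ih
  | prod _ ih => exact weight_nonneg_of_mem_runsProd ih

def weightedSum (φ : Finset (List ℕ) → ℝ) (l : List (Finset (List ℕ) × ℝ)) : ℝ :=
  (l.map fun Sw => Sw.2 * φ Sw.1).sum

section WeightedSum

variable {φ ψ φ₀ φ₁ : Finset (List ℕ) → ℝ} {l : List (Finset (List ℕ) × ℝ)}

theorem weightedSum_nonneg (hw : ∀ Sw ∈ l, 0 ≤ Sw.2) (hφ : ∀ S, 0 ≤ φ S) :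
    0 ≤ weightedSum φ l :=
  List.sum_nonneg <| by
    simp only [List.mem_map]
    rintro _ ⟨Sw, hSw, rfl⟩
    exact mul_nonneg (hw Sw hSw) (hφ Sw.1)

theorem weightedSum_mono (hw : ∀ Sw ∈ l, 0 ≤ Sw.2) (hφψ : ∀ S, φ S ≤ ψ S) :
    weightedSum φ l ≤ weightedSum ψ l :=
  List.sum_le_sum fun Sw hSw => mul_le_mul_of_nonneg_left (hφψ Sw.1) (hw Sw hSw)

theorem weightedSum_eq_zero (hφ : ∀ Sw ∈ l, φ Sw.1 = 0) : weightedSum φ l = 0 :=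
  List.sum_eq_zero <| by
    simp only [List.mem_map]
    rintro _ ⟨Sw, hSw, rfl⟩
    rw [hφ Sw hSw, mul_zero]

theorem weightedSum_congr (h : ∀ Sw ∈ l, φ Sw.1 = ψ Sw.1) : weightedSum φ l = weightedSum ψ l :=
  congrArg List.sum <| List.map_congr_left fun Sw hSw => by rw [h Sw hSw]

theorem weightedSum_runsSum_cons {i : ℕ} {pc : ℝ × PCTree} {rest : List (ℝ × PCTree)}
    (hφ : ∀ S, φ (insert [] (S.image (i :: ·))) = φ₀ S) :
    weightedSum φ (runsSum i (pc :: rest)) =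
      pc.1 * weightedSum φ₀ pc.2.runs + weightedSum φ (runsSum (i + 1) rest) := by
  simp only [weightedSum, runsSum, List.map_append, List.sum_append, List.map_map,
    Function.comp_def, hφ, mul_assoc, List.sum_map_mul_left]

theorem weightedSum_runsProd_cons {i : ℕ} {c : PCTree} {rest : List PCTree}
    (hφ : ∀ S, ∀ Tw ∈ runsProd (i + 1) rest,
      φ (insert [] (S.image (i :: ·)) ∪ Tw.1) = φ₀ S * φ₁ Tw.1) :
    weightedSum φ (runsProd i (c :: rest)) =
      weightedSum φ₀ c.runs * weightedSum φ₁ (runsProd (i + 1) rest) := by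
  simp only [weightedSum, runsProd, List.map_flatMap, List.map_map, Function.comp_def]
  rw [List.flatMap_def, List.sum_flatten, List.map_map, ← List.sum_map_mul_right]
  refine congrArg List.sum (List.map_congr_left fun Sw _ => ?_)
  rw [Function.comp_apply, ← List.sum_map_mul_left]
  refine congrArg List.sum (List.map_congr_left fun Tw hTw => ?_)
  rw [hφ Sw.1 Tw hTw]
  ring

theorem weightedSum_runsSum (φ : Finset (List ℕ) → ℝ) (cs : List (ℝ × PCTree)) (j : ℕ) :
    weightedSum φ (runsSum j cs) = ((cs.zipIdx j).map fun x =>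
      x.1.1 * weightedSum (fun S => φ (insert [] (S.image (x.2 :: ·)))) x.1.2.runs).sum := by
  induction cs generalizing j with
  | nil => simp [weightedSum, runsSum]
  | cons pc rest ih => rw [weightedSum_runsSum_cons fun _ => rfl, ih, List.zipIdx_cons]; simp

theorem weightedSum_ite_mem_nonneg {G : List ℕ → ℝ} (hw : ∀ Sw ∈ l, 0 ≤ Sw.2)
    (hG : ∀ q, 0 ≤ G q) (n : List ℕ) :
    0 ≤ weightedSum (fun S => if n ∈ S then ∏ q ∈ S, G q else 0) l :=
  weightedSum_nonneg hw fun S => by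
    split_ifs
    exacts [Finset.prod_nonneg fun q _ => hG q, le_rfl]

theorem weightedSum_ite_mem_le {G : List ℕ → ℝ} (hw : ∀ Sw ∈ l, 0 ≤ Sw.2)
    (hG : ∀ q, 0 ≤ G q) (n : List ℕ) :
    weightedSum (fun S => if n ∈ S then ∏ q ∈ S, G q else 0) l ≤
      weightedSum (fun S => ∏ q ∈ S, G q) l :=
  weightedSum_mono hw fun S => by
    split_ifs
    exacts [le_rfl, Finset.prod_nonneg fun q _ => hG q]

theorem sum_map_filter_mem_eq_weightedSum (G : List ℕ → ℝ) (n : List ℕ) :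
    ((l.filter fun Sw => n ∈ Sw.1).map fun Sw => Sw.2 * ∏ q ∈ Sw.1, G q).sum =
      weightedSum (fun S => if n ∈ S then ∏ q ∈ S, G q else 0) l := by
  simp only [weightedSum, mul_ite, mul_zero]
  rw [List.sum_map_ite]
  simp

end WeightedSum

section Factorization

variable {G : List ℕ → ℝ}

theorem weightedSum_runsProd (hG : G [] = 1) (cs : List PCTree) (j : ℕ) :
    weightedSum (fun S => ∏ q ∈ S, G q) (runsProd j cs) = ((cs.zipIdx j).map fun x =>
      weightedSum (fun S => ∏ r ∈ S, G (x.2 :: r)) x.1.runs).prod := by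
  induction cs generalizing j with
  | nil => simp [weightedSum, runsProd, hG]
  | cons c rest ih =>
    rw [weightedSum_runsProd_cons (φ₀ := fun S => ∏ r ∈ S, G (j :: r))
      (φ₁ := fun S => ∏ q ∈ S, G q) fun S Tw hTw =>
        prod_insert_nil_image_union hG (le_head_of_mem_runsProd Tw hTw),
      ih, List.zipIdx_cons, List.map_cons, List.prod_cons]

theorem weightedSum_ite_mem_runsSum (hG : G [] = 1) (p : List ℕ) {cs : List (ℝ × PCTree)}
    {j k : ℕ} {pc : ℝ × PCTree} (hk : cs[k]? = some pc) :
    weightedSum (fun S => if (j + k) :: p ∈ S then ∏ q ∈ S, G q else 0) (runsSum j cs) =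
      pc.1 * weightedSum (fun S => if p ∈ S then ∏ r ∈ S, G ((j + k) :: r) else 0) pc.2.runs := by
  induction cs generalizing j k with
  | nil => simp at hk
  | cons pc' rest ih =>
    cases k with
    | zero =>
      obtain rfl : pc' = pc := by simpa using hk
      have hrest : weightedSum (fun S => if j :: p ∈ S then ∏ q ∈ S, G q else 0)
          (runsSum (j + 1) rest) = 0 :=
        weightedSum_eq_zero fun Sw hSw =>
          if_neg fun h => Nat.not_succ_le_self j (le_head_of_mem_runsSum Sw hSw j p h)
      rw [Nat.add_zero, weightedSum_runsSum_cons
        (φ₀ := fun S => if p ∈ S then ∏ r ∈ S, G (j :: r) else 0)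
        fun S => by simp [prod_insert_nil_image hG], hrest, add_zero]
    | succ k =>
      rw [weightedSum_runsSum_cons (φ₀ := 0) fun S => by simp,
        show j + (k + 1) = j + 1 + k by omega, ih hk]
      simp [weightedSum]

-- `R` is the product of the total masses of the other children.
theorem exists_weightedSum_runsProd_factor (hG : G [] = 1) (p : List ℕ) {cs : List PCTree}
    {j k : ℕ} {c : PCTree} (hk : cs[k]? = some c) :
    ∃ R, weightedSum (fun S => ∏ q ∈ S, G q) (runsProd j cs) =
        weightedSum (fun S => ∏ r ∈ S, G ((j + k) :: r)) c.runs * R ∧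
      weightedSum (fun S => if (j + k) :: p ∈ S then ∏ q ∈ S, G q else 0) (runsProd j cs) =
        weightedSum (fun S => if p ∈ S then ∏ r ∈ S, G ((j + k) :: r) else 0) c.runs * R := by
  induction cs generalizing j k with
  | nil => simp at hk
  | cons c' rest ih =>
    have hunion : ∀ S, ∀ Tw ∈ runsProd (j + 1) rest, ∏ q ∈ insert [] (S.image (j :: ·)) ∪ Tw.1, G q
        = (∏ r ∈ S, G (j :: r)) * ∏ q ∈ Tw.1, G q := fun S Tw hTw =>
      prod_insert_nil_image_union hG (le_head_of_mem_runsProd Tw hTw)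
    have htotal := weightedSum_runsProd_cons (c := c') (φ := fun S => ∏ q ∈ S, G q)
      (φ₀ := fun S => ∏ r ∈ S, G (j :: r)) (φ₁ := fun S => ∏ q ∈ S, G q) hunion
    cases k with
    | zero =>
      obtain rfl : c' = c := by simpa using hk
      refine ⟨_, htotal, weightedSum_runsProd_cons fun S Tw hTw => ?_⟩
      have hmem : j :: p ∈ insert [] (S.image (j :: ·)) ∪ Tw.1 ↔ p ∈ S := by
        have := le_head_of_mem_runsProd Tw hTw j p
        simp only [Finset.mem_union, Finset.mem_insert, Finset.mem_image]
        grind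
      simp only [Nat.add_zero, hmem, hunion S Tw hTw, ite_mul, zero_mul]
    | succ k =>
      obtain ⟨R, hR, hRp⟩ := ih (j := j + 1) (by simpa using hk)
      rw [show j + (k + 1) = j + 1 + k by omega]
      refine ⟨weightedSum (fun S => ∏ r ∈ S, G (j :: r)) c'.runs * R, ?_, ?_⟩
      · rw [htotal, hR]
        ring
      · rw [weightedSum_runsProd_cons fun S Tw hTw => ?_, hRp]
        · ring
        have hmem : (j + 1 + k) :: p ∈ insert [] (S.image (j :: ·)) ∪ Tw.1 ↔
            (j + 1 + k) :: p ∈ Tw.1 := by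
          simp only [Finset.mem_union, Finset.mem_insert, Finset.mem_image]
          grind
        simp only [hmem, hunion S Tw hTw, mul_ite, mul_zero]

end Factorization

theorem evalSum_eq_sum_zipIdx (f : List ℕ → ℝ) (pre : List ℕ) (cs : List (ℝ × PCTree)) (j : ℕ) :
    evalSum f pre j cs =
      ((cs.zipIdx j).map fun x => x.1.1 * eval f (pre ++ [x.2]) x.1.2).sum := by
  induction cs generalizing j <;> simp [evalSum, *]

theorem evalProd_eq_prod_zipIdx (f : List ℕ → ℝ) (pre : List ℕ) (cs : List PCTree) (j : ℕ) :
    evalProd f pre j cs = ((cs.zipIdx j).map fun x => eval f (pre ++ [x.2]) x.1).prod := by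
  induction cs generalizing j <;> simp [evalProd, *]

theorem weightedSum_runs_eq_eval (f : List ℕ → ℝ) : ∀ (t : PCTree) (pre : List ℕ),
    weightedSum (fun S => ∏ q ∈ S, leafWeight (fun q => f (pre ++ q)) t q) t.runs = eval f pre t
  | .leaf, pre => by simp [weightedSum, runs, eval, leafWeight, isLeafAt]
  | .sum cs, pre => by
    show weightedSum _ (runsSum 0 cs) = evalSum f pre 0 cs
    rw [weightedSum_runsSum, evalSum_eq_sum_zipIdx]
    refine congrArg List.sum (List.map_congr_left fun x hx => ?_)
    have hx' : cs[x.2]? = some x.1 := List.mem_zipIdx_iff_getElem?.mp hx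
    rw [← weightedSum_runs_eq_eval f x.1.2 (pre ++ [x.2])]
    simp only [prod_insert_nil_image (leafWeight_sum_nil _ _), leafWeight_sum_cons hx',
      List.append_assoc, List.singleton_append]
  | .prod cs, pre => by
    show weightedSum _ (runsProd 0 cs) = evalProd f pre 0 cs
    rw [weightedSum_runsProd (leafWeight_prod_nil _ _), evalProd_eq_prod_zipIdx]
    refine congrArg List.prod (List.map_congr_left fun x hx => ?_)
    have hx' : cs[x.2]? = some x.1 := List.mem_zipIdx_iff_getElem?.mp hx
    rw [← weightedSum_runs_eq_eval f x.1 (pre ++ [x.2])]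
    simp only [leafWeight_prod_cons hx', List.append_assoc, List.singleton_append]
termination_by t => t
decreasing_by
  · obtain ⟨⟨θ, c⟩, k⟩ := x
    have := List.sizeOf_lt_of_mem (List.fst_mem_of_mem_zipIdx hx)
    simp only [sum.sizeOf_spec, Prod.mk.sizeOf_spec] at this ⊢
    omega
  · have := List.sizeOf_lt_of_mem (List.fst_mem_of_mem_zipIdx hx)
    simp only [prod.sizeOf_spec]
    omega

section Flow

variable {f : List ℕ → ℝ} {pre p : List ℕ} {i : ℕ}

theorem flowAux_mul_eval_sum (hf : ∀ q, 0 ≤ f q) {cs : List (ℝ × PCTree)}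
    (ht : (PCTree.sum cs).Valid) {pc : ℝ × PCTree} (hpc : cs[i]? = some pc)
    (hchild : flowAux f pc.2 (pre ++ [i]) p * eval f (pre ++ [i]) pc.2 = weightedSum
      (fun S => if p ∈ S then ∏ q ∈ S, leafWeight (fun q => f (pre ++ [i] ++ q)) pc.2 q else 0)
      pc.2.runs) :
    flowAux f (.sum cs) pre (i :: p) * eval f pre (.sum cs) = weightedSum
      (fun S => if i :: p ∈ S then ∏ q ∈ S, leafWeight (fun q => f (pre ++ q)) (.sum cs) q else 0)
      (PCTree.sum cs).runs := by
  by_cases hE : eval f pre (.sum cs) = 0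
  · -- `x / 0 = 0` makes the flow vanish; the mass of the runs through the node is squeezed
    -- between `0` and `p_n(x) = 0`.
    have hG := leafWeight_nonneg (fun q => hf (pre ++ q)) (.sum cs)
    rw [hE, mul_zero]
    refine le_antisymm (weightedSum_ite_mem_nonneg ht.weight_nonneg hG _) ?_
    calc _ ≤ _ := weightedSum_ite_mem_le ht.weight_nonneg hG _
      _ = 0 := by rw [weightedSum_runs_eq_eval, hE]
  · have hm := weightedSum_ite_mem_runsSum (j := 0)
      (leafWeight_sum_nil (fun q => f (pre ++ q)) cs) p hpc
    simp only [Nat.zero_add, leafWeight_sum_cons hpc] at hm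
    simp only [List.append_assoc, List.singleton_append] at hchild
    simp only [flowAux, hpc]
    rw [runs, hm, ← hchild]
    field_simp

theorem flowAux_mul_eval_prod {cs : List PCTree} {c : PCTree} (hc : cs[i]? = some c)
    (hchild : flowAux f c (pre ++ [i]) p * eval f (pre ++ [i]) c = weightedSum
      (fun S => if p ∈ S then ∏ q ∈ S, leafWeight (fun q => f (pre ++ [i] ++ q)) c q else 0)
      c.runs) :
    flowAux f (.prod cs) pre (i :: p) * eval f pre (.prod cs) = weightedSum
      (fun S => if i :: p ∈ S then ∏ q ∈ S, leafWeight (fun q => f (pre ++ q)) (.prod cs) q else 0)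
      (PCTree.prod cs).runs := by
  obtain ⟨R, hR, hRp⟩ := exists_weightedSum_runsProd_factor (j := 0)
    (leafWeight_prod_nil (fun q => f (pre ++ q)) cs) p hc
  have hEc := weightedSum_runs_eq_eval f c (pre ++ [i])
  simp only [Nat.zero_add, leafWeight_prod_cons hc] at hR hRp
  simp only [List.append_assoc, List.singleton_append] at hEc hchild
  rw [← weightedSum_runs_eq_eval f (.prod cs) pre]
  simp only [flowAux, hc]
  rw [runs, hR, hRp, ← hchild, hEc, mul_assoc]

theorem flowAux_mul_eval (hf : ∀ q, 0 ≤ f q) (n : List ℕ) :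
    ∀ {t : PCTree} {pre : List ℕ}, t.Valid → t.IsNode n →
      flowAux f t pre n * eval f pre t = weightedSum
        (fun S => if n ∈ S then ∏ q ∈ S, leafWeight (fun q => f (pre ++ q)) t q else 0) t.runs := by
  induction n with
  | nil =>
    intro t pre _ _
    rw [flowAux, one_mul, ← weightedSum_runs_eq_eval]
    exact weightedSum_congr fun Sw hSw => (if_pos (nil_mem_of_mem_runs Sw hSw)).symm
  | cons i p ih =>
    intro t pre ht hn
    cases t with
    | leaf => simp [IsNode] at hn
    | sum cs =>
      obtain ⟨pc, hpc, hp⟩ : ∃ pc, cs[i]? = some pc ∧ pc.2.IsNode p := by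
        cases h : cs[i]? <;> simp_all [IsNode]
      refine flowAux_mul_eval_sum hf ht hpc (ih ?_ hp)
      cases ht with | sum _ hv _ => exact hv pc (List.mem_of_getElem? hpc)
    | prod cs =>
      obtain ⟨c, hc, hp⟩ : ∃ c, cs[i]? = some c ∧ c.IsNode p := by
        cases h : cs[i]? <;> simp_all [IsNode]
      refine flowAux_mul_eval_prod hc (ih ?_ hp)
      cases ht with | prod hv => exact hv c (List.mem_of_getElem? hc)

end Flow

end PCTree

/-- Circuit flow semantics (tree-shaped PCs): the flow `F_n(x)` of a node (equivalently,
of the sum edge into it) equals the conditional probability, under the generative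
sampling process conditioned on the sampled instance being `x`, that the node is
traversed; consequently the flow lies in `[0,1]`. -/
theorem flow_eq_conditional_traversal_prob (t : PCTree) (ht : t.Valid)
    (f : List ℕ → ℝ) (hf : ∀ q, 0 ≤ f q)
    (P : ℝ) (hP : P = (t.runs.map fun Sw => Sw.2 * t.runLike f Sw.1).sum)
    (hPpos : 0 < P) (hPeval : P = PCTree.eval f [] t)
    (n : List ℕ) (hn : t.IsNode n) :
    PCTree.flow f t n =
      ((t.runs.filter fun Sw => n ∈ Sw.1).map fun Sw => Sw.2 * t.runLike f Sw.1).sum / P ∧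
    0 ≤ PCTree.flow f t n ∧ PCTree.flow f t n ≤ 1 := by
  have hw := ht.weight_nonneg
  have hG := PCTree.leafWeight_nonneg hf t
  have hmass := PCTree.flowAux_mul_eval hf n (pre := []) ht hn
  simp only [List.nil_append, ← hPeval] at hmass
  simp only [PCTree.runLike_eq_prod_leafWeight, PCTree.sum_map_filter_mem_eq_weightedSum] at hP ⊢
  set N := PCTree.weightedSum (fun S => if n ∈ S then ∏ q ∈ S, PCTree.leafWeight f t q else 0)
    t.runs
  have hflow : PCTree.flow f t n = N / P := eq_div_of_mul_eq hPpos.ne' hmass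
  have hle : N ≤ P := hP ▸ PCTree.weightedSum_ite_mem_le hw hG n
  refine ⟨hflow, ?_, ?_⟩ <;> rw [hflow]
  · exact div_nonneg (PCTree.weightedSum_ite_mem_nonneg hw hG n) hPpos.le
  · exact div_le_one_of_le₀ hle hPpos.le
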